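/- Let Δ be a 2-local derivation on 𝓑 with Δ(L_{0,0}) = Δ(L_{1,0}) = Δ(L_{−1,1}) = 0. Then Δ(x) = 0 for all x ∈ 𝓑. -/

import Mathlib

noncomputable section

abbrev B := (ℤ × ℕ) →₀ ℂ

/-- basis element `L α i` -/
def L (α : ℤ) (i : ℕ) : B := Finsupp.single (α, i) 1

/-- structure constant `(α-1)(j+1) - (β-1)(i+1)` -/
def coef (p q : ℤ × ℕ) : ℂ :=
  ((p.1 - 1) * ((q.2 : ℤ) + 1) - (q.1 - 1) * ((p.2 : ℤ) + 1) : ℤ)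

/-- the Block-type bracket, as a bilinear map -/
def br : B →ₗ[ℂ] B →ₗ[ℂ] B :=
  Finsupp.lsum ℂ fun p => LinearMap.toSpanSingleton ℂ _
    (Finsupp.lsum ℂ fun q => LinearMap.toSpanSingleton ℂ _
      (coef p q • L (p.1 + q.1) (p.2 + q.2)))

/-- the outer derivation `d`, with `d (L β j) = β • L β j` -/
def dmap : B →ₗ[ℂ] B :=
  Finsupp.lsum ℂ fun p => LinearMap.toSpanSingleton ℂ _ ((p.1 : ℂ) • L p.1 p.2)

def IsDer (D : B →ₗ[ℂ] B) : Prop := ∀ x y, D (br x y) = br (D x) y + br x (D y)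

def Is2Local (Δ : B → B) : Prop :=
  ∀ x y, ∃ D : B →ₗ[ℂ] B, IsDer D ∧ Δ x = D x ∧ Δ y = D y

/-!
Pairing an element `y` with `L 1 0` and with `L (-1) 1` in the 2-local condition writes `Δ y`
both as `[c, y]` with `c` supported on the antidiagonal `α + i = 0` and as `[b, y] + b₀₀ d y`
with `b` supported on `{(0, 0)} ∪ {α = 1}`; comparing coefficients forces `c = 0`, so `Δ y = 0`
for suitable two-term elements `y = L q₁ + L q₂`.

Take `y = L V 0 + L (3V - 1) 1`. If `(ad a + λ d) y = 0`, evaluating at `(V, 0)` and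
`(3V - 1, 1)` gives `λ = a₀₀ = 0` (the point `(2V - 1, 1) = (3V - 1, 1) - (V, 0)` satisfies
`coef _ (V, 0) = 0`), and evaluating at `p + (V, 0)` for the `p ∈ supp a` of least `α` gives
`coef p (V, 0) = 0`, whence `α ≥ V` on `supp a`. Pairing `x` with this `y` therefore gives
`Δ x = [a, x]` with `supp a` in `α ≥ V`, and symmetrically `Δ x = [a', x]` with `supp a'` in
`α ≤ -V`. Once `V` exceeds the `α`-range of `x`, these two brackets live in disjoint ranges of
`α`, so `Δ x = 0`.
-/

open Finsupp

lemma br_apply (a x : B) (r : ℤ × ℕ) :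
    br a x r = ∑ p ∈ a.support, ∑ q ∈ x.support,
      if p + q = r then a p * x q * coef p q else 0 := by
  simp only [br, L, smul_single, smul_eq_mul, mul_one, coe_lsum, sum,
    LinearMap.toSpanSingleton_apply, LinearMap.coe_sum, LinearMap.coe_smul, Finset.sum_apply,
    Pi.smul_apply, coe_finsetSum, coe_smul, single_apply, Finset.mul_sum]
  refine Finset.sum_congr rfl fun p _ => Finset.sum_congr rfl fun q _ => ?_
  rw [← Prod.mk_add_mk]
  split_ifs <;> ring

lemma dmap_apply (z : B) (r : ℤ × ℕ) : dmap z r = r.1 * z r := by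
  simp only [dmap, L, coe_lsum, LinearMap.toSpanSingleton_apply, Prod.mk.eta, smul_single,
    smul_eq_mul, mul_one, Finsupp.sum_apply, single_apply, sum_ite_eq', mem_support_iff]
  split_ifs with h
  · ring
  · simp [not_not.mp h]

lemma support_L (q : ℤ × ℕ) : (L q.1 q.2).support = {q} :=
  support_single _ one_ne_zero

lemma L_apply_self (q : ℤ × ℕ) : L q.1 q.2 q = 1 := single_eq_same

lemma L_apply_of_ne {q r : ℤ × ℕ} (h : q ≠ r) : L q.1 q.2 r = 0 := single_eq_of_ne' h

lemma exists_add_eq_of_br_apply_ne_zero {a x : B} {r : ℤ × ℕ} (h : br a x r ≠ 0) :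
    ∃ p ∈ a.support, ∃ q ∈ x.support, p + q = r := by
  rw [br_apply] at h
  obtain ⟨p, hp, hpr⟩ := Finset.exists_ne_zero_of_sum_ne_zero h
  obtain ⟨q, hq, hqr⟩ := Finset.exists_ne_zero_of_sum_ne_zero hpr
  exact ⟨p, hp, q, hq, (ite_ne_right_iff.mp hqr).1⟩

lemma br_L_apply_add (a : B) (p q : ℤ × ℕ) : br a (L q.1 q.2) (p + q) = a p * coef p q := by
  simp only [br_apply, support_L, Finset.sum_singleton, L_apply_self, mul_one, add_left_inj,
    Finset.sum_ite_eq', mem_support_iff]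
  split_ifs with h
  · rfl
  · simp [not_not.mp h]

lemma br_L_apply_self (a : B) (q : ℤ × ℕ) : br a (L q.1 q.2) q = a 0 * coef 0 q := by
  simpa using br_L_apply_add a 0 q

lemma br_L_apply_eq_zero {a : B} {q r : ℤ × ℕ} (h : ∀ p ∈ a.support, p + q ≠ r) :
    br a (L q.1 q.2) r = 0 := by
  by_contra hr
  obtain ⟨p, hp, q', hq', hpq⟩ := exists_add_eq_of_br_apply_ne_zero hr
  rw [support_L, Finset.mem_singleton] at hq'
  exact h p hp (hq' ▸ hpq)

lemma coef_eq_zero_iff {p q : ℤ × ℕ} :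
    coef p q = 0 ↔ (p.1 - 1) * (q.2 + 1) = (q.1 - 1) * (p.2 + 1) := by
  rw [coef, Int.cast_eq_zero, sub_eq_zero]

lemma coef_zero_left (q : ℤ × ℕ) : coef 0 q = -(q.1 + q.2) := by
  simp [coef]
  ring

def der (a : B) (lam : ℂ) : B →ₗ[ℂ] B := br a + lam • dmap

lemma der_apply_apply (a : B) (lam : ℂ) (y : B) (r : ℤ × ℕ) :
    der a lam y r = br a y r + lam * (r.1 * y r) := by
  simp [der, dmap_apply]

lemma der_L_apply_add (a : B) (lam : ℂ) (p q : ℤ × ℕ) :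
    der a lam (L q.1 q.2) (p + q) = a p * coef p q + if p = 0 then lam * q.1 else 0 := by
  rw [der_apply_apply, br_L_apply_add]
  split_ifs with hp
  · simp [hp, L_apply_self]
  · simp [L_apply_of_ne (q := q) (r := p + q) (by simpa [eq_comm] using hp)]

lemma der_zero_right (a : B) : der a 0 = br a := by simp [der]

def Is2LocalStd (Δ : B → B) : Prop :=
  ∀ x y, ∃ (a : B) (lam : ℂ), Δ x = der a lam x ∧ Δ y = der a lam y

lemma Is2Local.is2LocalStd {Δ : B → B} (hΔ : Is2Local Δ)
    (hDer : ∀ D : B →ₗ[ℂ] B, IsDer D → ∃ (a : B) (lam : ℂ), ∀ x : B, D x = br a x + lam • dmap x) :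
    Is2LocalStd Δ := fun x y => by
  obtain ⟨D, hD, hx, hy⟩ := hΔ x y
  obtain ⟨a, lam, hDa⟩ := hDer D hD
  exact ⟨a, lam, hx.trans (hDa x), hy.trans (hDa y)⟩

lemma der_L_apply_add_eq_zero {a : B} {lam : ℂ} {q : ℤ × ℕ} (h : der a lam (L q.1 q.2) = 0)
    (p : ℤ × ℕ) : a p * coef p q + (if p = 0 then lam * q.1 else 0) = 0 :=
  (der_L_apply_add a lam p q).symm.trans (DFunLike.congr_fun h _)

lemma of_der_L_neg_one_one_eq_zero {c : B} {lam : ℂ} (h : der c lam (L (-1) 1) = 0) :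
    lam = 0 ∧ ∀ p : ℤ × ℕ, p.1 + p.2 ≠ 0 → c p = 0 := by
  have key := der_L_apply_add_eq_zero (q := (-1, 1)) h
  have hlam : lam = 0 := by simpa [coef] using key 0
  refine ⟨hlam, fun p hp => ?_⟩
  have hcoef : coef p (-1, 1) ≠ 0 := by
    rw [Ne, coef_eq_zero_iff]
    omega
  simpa [hlam, hcoef] using key p

lemma of_der_L_one_zero_eq_zero {b : B} {mu : ℂ} (h : der b mu (L 1 0) = 0) :
    b 0 = mu ∧ ∀ p : ℤ × ℕ, p ≠ 0 → p.1 ≠ 1 → b p = 0 := by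
  have key := der_L_apply_add_eq_zero (q := (1, 0)) h
  refine ⟨by simpa [coef, neg_add_eq_zero] using key 0, fun p hp0 hp1 => ?_⟩
  have hcoef : coef p (1, 0) ≠ 0 := by
    rw [Ne, coef_eq_zero_iff]
    omega
  simpa [hp0, hcoef] using key p

lemma br_L_apply_eq_zero_of_antidiagonal {c : B} (hc : ∀ p : ℤ × ℕ, p.1 + p.2 ≠ 0 → c p = 0)
    {q r : ℤ × ℕ} (h : r.1 + r.2 ≠ q.1 + q.2) : br c (L q.1 q.2) r = 0 := by
  refine br_L_apply_eq_zero fun p hp hpq => ?_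
  have hψ : p.1 + p.2 = 0 := by_contra fun hψ => mem_support_iff.mp hp (hc p hψ)
  subst hpq
  simp only [Prod.fst_add, Prod.snd_add, Nat.cast_add] at h
  omega

lemma br_L_apply_eq_zero_of_fst_eq_one {b : B} (hb : ∀ p : ℤ × ℕ, p ≠ 0 → p.1 ≠ 1 → b p = 0)
    {q r : ℤ × ℕ} (h₀ : q ≠ r) (h₁ : q.1 + 1 ≠ r.1) : br b (L q.1 q.2) r = 0 := by
  refine br_L_apply_eq_zero fun p hp hpq => ?_
  subst hpq
  by_cases hp0 : p = 0
  · simp [hp0] at h₀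
  · have hp1 : p.1 = 1 := by_contra fun hp1 => mem_support_iff.mp hp (hb p hp0 hp1)
    simp [hp1, add_comm] at h₁

lemma apply_eq_zero_of_br_eq_der {b c : B} {q₁ q₂ : ℤ × ℕ}
    (hc : ∀ p : ℤ × ℕ, p.1 + p.2 ≠ 0 → c p = 0) (hb : ∀ p : ℤ × ℕ, p ≠ 0 → p.1 ≠ 1 → b p = 0)
    (hψ₁ : q₁.1 + q₁.2 ≠ 0) (hψ : q₁.1 + q₁.2 ≠ q₂.1 + q₂.2) (hlt : q₁.1 + 2 ≤ q₂.1)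
    (h : br c (L q₁.1 q₁.2 + L q₂.1 q₂.2) = der b (b 0) (L q₁.1 q₁.2 + L q₂.1 q₂.2))
    {p : ℤ × ℕ} (hp : p ≠ 0) : c p = 0 := by
  by_cases hpψ : p.1 + p.2 ≠ 0
  · exact hc p hpψ
  push Not at hpψ
  have hq₂ : q₂ ≠ p + q₁ := by
    rintro rfl
    simp only [Prod.fst_add, Prod.snd_add, Nat.cast_add] at hψ
    omega
  have hr := DFunLike.congr_fun h (p + q₁)
  simp only [map_add, der_apply_apply, Finsupp.add_apply] at hr
  rw [br_L_apply_add, br_L_apply_add, hb p hp (by omega),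
    br_L_apply_eq_zero_of_antidiagonal hc
      (by simp only [Prod.fst_add, Prod.snd_add, Nat.cast_add]; omega),
    br_L_apply_eq_zero_of_fst_eq_one hb hq₂ (by simp only [Prod.fst_add]; omega),
    L_apply_of_ne (by simpa [eq_comm] using hp), L_apply_of_ne hq₂] at hr
  have hcoef : coef p q₁ ≠ 0 := by
    rw [Ne, coef_eq_zero_iff]
    intro hpq
    have : ((p.2 : ℤ) + 1) * (q₁.1 + q₁.2) = 0 := by linear_combination (q₁.2 + 1 : ℤ) * hpψ - hpq
    rcases mul_eq_zero.mp this with h' | h'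
    · omega
    · exact hψ₁ h'
  simpa [hcoef] using hr

lemma apply_zero_eq_zero_of_br_eq_der {b c : B} {q₁ q₂ : ℤ × ℕ}
    (hc : ∀ p : ℤ × ℕ, p.1 + p.2 ≠ 0 → c p = 0) (hb : ∀ p : ℤ × ℕ, p ≠ 0 → p.1 ≠ 1 → b p = 0)
    (hψ₁ : q₁.1 + q₁.2 ≠ 0) (hψ : q₁.1 + q₁.2 ≠ q₂.1 + q₂.2) (hlt : q₁.1 + 2 ≤ q₂.1)
    (hdet : q₁.2 * q₂.1 ≠ q₂.2 * q₁.1)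
    (h : br c (L q₁.1 q₁.2 + L q₂.1 q₂.2) = der b (b 0) (L q₁.1 q₁.2 + L q₂.1 q₂.2)) :
    c 0 = 0 := by
  have hq : q₁ ≠ q₂ := by
    rintro rfl
    exact hψ rfl
  have h₁ := DFunLike.congr_fun h q₁
  have h₂ := DFunLike.congr_fun h q₂
  simp only [map_add, der_apply_apply, Finsupp.add_apply] at h₁ h₂
  rw [br_L_apply_self, br_L_apply_self, L_apply_self, L_apply_of_ne hq.symm,
    br_L_apply_eq_zero_of_antidiagonal hc (by omega),
    br_L_apply_eq_zero_of_fst_eq_one hb hq.symm (by omega)] at h₁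
  rw [br_L_apply_self, br_L_apply_self, L_apply_self, L_apply_of_ne hq,
    br_L_apply_eq_zero_of_antidiagonal hc (by omega),
    br_L_apply_eq_zero_of_fst_eq_one hb hq (by omega)] at h₂
  rw [coef_zero_left] at h₁ h₂
  have hdetC : ((q₁.2 * q₂.1 - q₂.2 * q₁.1 : ℤ) : ℂ) ≠ 0 := by exact_mod_cast sub_ne_zero.mpr hdet
  have hψC : ((q₁.1 + q₁.2 : ℤ) : ℂ) ≠ 0 := by exact_mod_cast hψ₁
  push_cast at hdetC hψC
  have hb0 : b 0 = 0 := by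
    refine (mul_eq_zero.mp ?_).resolve_right hdetC
    linear_combination ((q₂.1 : ℂ) + q₂.2) * h₁ - ((q₁.1 : ℂ) + q₁.2) * h₂
  refine (mul_eq_zero.mp ?_).resolve_right hψC
  linear_combination -h₁ + (q₁.2 : ℂ) * hb0

lemma eq_zero_of_br_eq_der {b c : B} {q₁ q₂ : ℤ × ℕ}
    (hc : ∀ p : ℤ × ℕ, p.1 + p.2 ≠ 0 → c p = 0) (hb : ∀ p : ℤ × ℕ, p ≠ 0 → p.1 ≠ 1 → b p = 0)
    (hψ₁ : q₁.1 + q₁.2 ≠ 0) (hψ : q₁.1 + q₁.2 ≠ q₂.1 + q₂.2) (hlt : q₁.1 + 2 ≤ q₂.1)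
    (hdet : q₁.2 * q₂.1 ≠ q₂.2 * q₁.1)
    (h : br c (L q₁.1 q₁.2 + L q₂.1 q₂.2) = der b (b 0) (L q₁.1 q₁.2 + L q₂.1 q₂.2)) : c = 0 := by
  ext p
  by_cases hp : p = 0
  · rw [hp]
    exact apply_zero_eq_zero_of_br_eq_der hc hb hψ₁ hψ hlt hdet h
  · exact apply_eq_zero_of_br_eq_der hc hb hψ₁ hψ hlt h hp

lemma Is2LocalStd.map_L_add_L_eq_zero {Δ : B → B} (hΔ : Is2LocalStd Δ)
    (h₁ : Δ (L 1 0) = 0) (h₂ : Δ (L (-1) 1) = 0) {q₁ q₂ : ℤ × ℕ}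
    (hψ₁ : q₁.1 + q₁.2 ≠ 0) (hψ : q₁.1 + q₁.2 ≠ q₂.1 + q₂.2) (hlt : q₁.1 + 2 ≤ q₂.1)
    (hdet : q₁.2 * q₂.1 ≠ q₂.2 * q₁.1) : Δ (L q₁.1 q₁.2 + L q₂.1 q₂.2) = 0 := by
  obtain ⟨c, lam, hyc, hcL⟩ := hΔ (L q₁.1 q₁.2 + L q₂.1 q₂.2) (L (-1) 1)
  obtain ⟨rfl, hc⟩ := of_der_L_neg_one_one_eq_zero (hcL.symm.trans h₂)
  obtain ⟨b, mu, hyb, hbL⟩ := hΔ (L q₁.1 q₁.2 + L q₂.1 q₂.2) (L 1 0)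
  obtain ⟨rfl, hb⟩ := of_der_L_one_zero_eq_zero (hbL.symm.trans h₁)
  rw [der_zero_right] at hyc
  rw [hyc, eq_zero_of_br_eq_der hc hb hψ₁ hψ hlt hdet (hyc.symm.trans hyb), map_zero,
    LinearMap.zero_apply]

lemma of_der_L_add_L_eq_zero {a : B} {lam : ℂ} {q q' s : ℤ × ℕ} (hqs : q + s = q')
    (hs : coef s q = 0) (hs₂ : 0 < s.2) (hdet : q.2 * s.1 ≠ q.1 * s.2)
    (h : der a lam (L q.1 q.2 + L q'.1 q'.2) = 0) : lam = 0 ∧ a 0 = 0 := by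
  subst hqs
  have hq : q ≠ q + s := fun hq => by
    have := congrArg Prod.snd hq
    simp only [Prod.snd_add] at this
    omega
  have e₁ := DFunLike.congr_fun h q
  have e₂ := DFunLike.congr_fun h (s + q)
  simp only [map_add, der_apply_apply, Finsupp.add_apply, Finsupp.coe_zero, Pi.zero_apply] at e₁ e₂
  rw [br_L_apply_self, L_apply_self, L_apply_of_ne hq.symm, br_L_apply_eq_zero (fun p _ hp => by
    have := congrArg Prod.snd hp
    simp only [Prod.snd_add] at this
    omega)] at e₁
  rw [br_L_apply_add, hs, add_comm s q, br_L_apply_self, L_apply_self, L_apply_of_ne hq] at e₂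
  simp only [coef_zero_left, Prod.fst_add, Prod.snd_add] at e₁ e₂
  push_cast at e₁ e₂
  have hdetC : ((q.2 * s.1 - q.1 * s.2 : ℤ) : ℂ) ≠ 0 := by exact_mod_cast sub_ne_zero.mpr hdet
  push_cast at hdetC
  constructor
  · refine (mul_eq_zero.mp ?_).resolve_right hdetC
    linear_combination (q.1 + q.2 : ℂ) * e₂ - (s.1 + s.2 + q.1 + q.2 : ℂ) * e₁
  · refine (mul_eq_zero.mp ?_).resolve_right hdetC
    linear_combination (q.1 : ℂ) * e₂ - (s.1 + q.1 : ℂ) * e₁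

lemma mul_coef_eq_zero_of_br_eq_zero {a : B} {q q' p : ℤ × ℕ}
    (h : br a (L q.1 q.2 + L q'.1 q'.2) = 0) (hp : ∀ p' ∈ a.support, p' + q' ≠ p + q) :
    a p * coef p q = 0 := by
  have e := DFunLike.congr_fun h (p + q)
  rwa [map_add (br a), Finsupp.add_apply, br_L_apply_add, br_L_apply_eq_zero hp, add_zero] at e

lemma coef_eq_zero_of_forall_le_of_br_eq_zero (f : ℤ × ℕ →+ ℤ) {a : B} {q q' p : ℤ × ℕ}
    (h : br a (L q.1 q.2 + L q'.1 q'.2) = 0) (hq : f q < f q') (hp : p ∈ a.support)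
    (hmin : ∀ p' ∈ a.support, f p ≤ f p') : coef p q = 0 := by
  refine (mul_eq_zero.mp (mul_coef_eq_zero_of_br_eq_zero h fun p' hp' hpq => ?_)).resolve_left
    (mem_support_iff.mp hp)
  have := congrArg f hpq
  rw [map_add, map_add] at this
  linarith [hmin p' hp']

lemma le_fst_of_der_eq_zero {V : ℤ} (hV : 0 < V) {a : B} {lam : ℂ}
    (h : der a lam (L V 0 + L (3 * V - 1) 1) = 0) : lam = 0 ∧ ∀ p ∈ a.support, V ≤ p.1 := by
  obtain ⟨rfl, -⟩ := of_der_L_add_L_eq_zero (q := (V, 0)) (q' := (3 * V - 1, 1))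
    (s := (2 * V - 1, 1))
    (by ext <;> simp; ring) (by rw [coef_eq_zero_iff]; simp; ring) one_pos (by simp; omega) h
  rw [der_zero_right] at h
  refine ⟨rfl, fun p hp => ?_⟩
  obtain ⟨p₀, hp₀, hmin⟩ := a.support.exists_min_image Prod.fst ⟨p, hp⟩
  have hcoef := coef_eq_zero_of_forall_le_of_br_eq_zero (AddMonoidHom.fst ℤ ℕ) (q := (V, 0))
    (q' := (3 * V - 1, 1)) h (by simp; omega) hp₀ hmin
  rw [coef_eq_zero_iff] at hcoef
  simp only [Nat.cast_zero, zero_add, mul_one] at hcoef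
  nlinarith [hmin p hp]

lemma fst_le_of_der_eq_zero {V : ℤ} (hV : 0 < V) {a : B} {lam : ℂ}
    (h : der a lam (L (-V) 0 + L (-3 * V - 1) 1) = 0) : lam = 0 ∧ ∀ p ∈ a.support, p.1 ≤ -V := by
  obtain ⟨rfl, -⟩ := of_der_L_add_L_eq_zero (q := (-V, 0)) (q' := (-3 * V - 1, 1))
    (s := (-2 * V - 1, 1))
    (by ext <;> simp; ring) (by rw [coef_eq_zero_iff]; simp; ring) one_pos (by simp; omega) h
  rw [der_zero_right] at h
  refine ⟨rfl, fun p hp => ?_⟩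
  obtain ⟨p₀, hp₀, hmax⟩ := a.support.exists_max_image Prod.fst ⟨p, hp⟩
  have hcoef := coef_eq_zero_of_forall_le_of_br_eq_zero (-AddMonoidHom.fst ℤ ℕ) (q := (-V, 0))
    (q' := (-3 * V - 1, 1)) h (by simp; omega) hp₀ (fun p' hp' => by simpa using hmax p' hp')
  rw [coef_eq_zero_iff] at hcoef
  simp only [Nat.cast_zero, zero_add, mul_one] at hcoef
  nlinarith [hmax p hp]

lemma br_eq_zero_of_br_eq_br {a₁ a₂ x : B} {V : ℤ} (h₁ : ∀ p ∈ a₁.support, V ≤ p.1)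
    (h₂ : ∀ p ∈ a₂.support, p.1 ≤ -V) (hx : ∀ q ∈ x.support, |q.1| < V) (h : br a₁ x = br a₂ x) :
    br a₁ x = 0 := by
  ext r
  by_contra hr
  obtain ⟨p, hp, q, hq, rfl⟩ := exists_add_eq_of_br_apply_ne_zero hr
  obtain ⟨p', hp', q', hq', hpq⟩ := exists_add_eq_of_br_apply_ne_zero (h ▸ hr)
  have hfst := congrArg Prod.fst hpq
  simp only [Prod.fst_add] at hfst
  have := h₁ p hp
  have := h₂ p' hp'
  have := abs_lt.mp (hx q hq)
  have := abs_lt.mp (hx q' hq')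
  omega

theorem two_local_vanishing_everywhere_general (Δ : B → B) (hΔ : Is2Local Δ)
    (hDer : ∀ D : B →ₗ[ℂ] B, IsDer D →
      ∃ (a : B) (lam : ℂ), ∀ x : B, D x = br a x + lam • dmap x)
    (h1 : Δ (L 1 0) = 0) (h2 : Δ (L (-1) 1) = 0) :
    ∀ x : B, Δ x = 0 := by
  have hΔ' := hΔ.is2LocalStd hDer
  intro x
  obtain ⟨M, hM⟩ := (x.support.image fun q => |q.1|).bddAbove
  set V := max M 1 + 1
  have hx (q) (hq : q ∈ x.support) : |q.1| < V :=
    (hM (Finset.mem_image_of_mem _ hq)).trans_lt (by omega)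
  have hR := hΔ'.map_L_add_L_eq_zero h1 h2 (q₁ := (V, 0)) (q₂ := (3 * V - 1, 1))
    (by simp; omega) (by simp; omega) (by simp; omega) (by simp; omega)
  have hL := hΔ'.map_L_add_L_eq_zero h1 h2 (q₁ := (-3 * V - 1, 1)) (q₂ := (-V, 0))
    (by simp; omega) (by simp; omega) (by simp; omega) (by simp; omega)
  obtain ⟨a₁, l₁, hx₁, hy₁⟩ := hΔ' x (L V 0 + L (3 * V - 1) 1)
  obtain ⟨rfl, ha₁⟩ := le_fst_of_der_eq_zero (by omega) (hy₁.symm.trans hR)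
  obtain ⟨a₂, l₂, hx₂, hy₂⟩ := hΔ' x (L (-V) 0 + L (-3 * V - 1) 1)
  obtain ⟨rfl, ha₂⟩ :=
    fst_le_of_der_eq_zero (by omega) (hy₂.symm.trans (add_comm (L (-V) 0) _ ▸ hL))
  rw [der_zero_right] at hx₁ hx₂
  rw [hx₁, br_eq_zero_of_br_eq_br ha₁ ha₂ hx (hx₁.symm.trans hx₂)]

theorem two_local_vanishing_everywhere (Δ : B → B) (hΔ : Is2Local Δ)
    (hDer : ∀ D : B →ₗ[ℂ] B, IsDer D →
      ∃ (a : B) (lam : ℂ), ∀ x : B, D x = br a x + lam • dmap x)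
    (h0 : Δ (L 0 0) = 0) (h1 : Δ (L 1 0) = 0) (h2 : Δ (L (-1) 1) = 0) :
    ∀ x : B, Δ x = 0 :=
  two_local_vanishing_everywhere_general Δ hΔ hDer h1 h2

end
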